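/- arXiv:2603.26223 — 2 statements merged into one kernel-verified Lean document; each statement's English description precedes it below -/
import Mathlib

section
/- Fix integers d ≥ 1 and r. Define F(m,k) = (-1)^k q^{dk(k-2m-1)/2 + (d-2r)m} [2dm+r] (q^r;q^d)_m^3 (q^r;q^d)_{m+k} / ((q^d;q^d)_m^3 (q^d;q^d)_{m-k} (q^r;q^d)_k^2) and G(m,k) = (-1)^{k-1} q^{dk(k-2m+1)/2 + (d-2r)(m-1)} (q^r;q^d)_m^3 (q^r;q^d)_{m+k-1} / ((1-q)^2 (q^d;q^d)_{m-1}^3 (q^d;q^d)_{m-k} (q^r;q^d)_k^2), with the convention 1/(q^d;q^d)_m = 0 for negative m. Then for all m ≥ 0 and k ≥ 1: [dk-d+r] F(m,k-1) - [dk-d+2r] F(m,k) = G(m+1,k) - G(m,k). -/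
open Finset Polynomial

/-- The indeterminate `q`, as a rational function over `ℚ`. -/
noncomputable def q : RatFunc ℚ := RatFunc.X

/-- The q-shifted factorial `(q^r; q^d)_m = ∏_{j=0}^{m-1} (1 - q^{r+dj})`. -/
noncomputable def qPoch (r d : ℤ) (m : ℕ) : RatFunc ℚ :=
  ∏ j ∈ Finset.range m, (1 - q ^ (r + d * (j : ℤ)))

/-- The q-integer `[m] = (1-q^m)/(1-q)`. -/
noncomputable def qint (m : ℤ) : RatFunc ℚ := (1 - q ^ m) / (1 - q)

/-- Congruence of rational functions modulo a polynomial `P`: the difference can be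
written with numerator divisible by `P` and denominator coprime to `P`. -/
def modCong (A B : RatFunc ℚ) (P : Polynomial ℚ) : Prop :=
  ∃ c e : Polynomial ℚ, IsCoprime e P ∧
    A - B = algebraMap (Polynomial ℚ) (RatFunc ℚ) (P * c) /
            algebraMap (Polynomial ℚ) (RatFunc ℚ) e

/-- The q-integer `[n]` as a polynomial: `1 + q + ⋯ + q^{n-1}`. -/
noncomputable def qintPoly (n : ℕ) : Polynomial ℚ := ∑ i ∈ Finset.range n, Polynomial.X ^ i

/-- `1/(q^d;q^d)_m` with the convention that it is `0` for negative `m`. -/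
noncomputable def pochInv (d : ℤ) (m : ℤ) : RatFunc ℚ :=
  if m < 0 then 0 else (qPoch d d m.toNat)⁻¹

/-- The function `F(m,k)` of the WZ-pair. -/
noncomputable def F (d r : ℤ) (m k : ℤ) : RatFunc ℚ :=
  (-1) ^ k * q ^ (d * k * (k - 2 * m - 1) / 2 + (d - 2 * r) * m) * qint (2 * d * m + r) *
    (qPoch r d m.toNat) ^ 3 * qPoch r d (m + k).toNat *
    (pochInv d m) ^ 3 * pochInv d (m - k) / (qPoch r d k.toNat) ^ 2

/-- The function `G(m,k)` of the WZ-pair. -/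
noncomputable def G (d r : ℤ) (m k : ℤ) : RatFunc ℚ :=
  (-1) ^ (k - 1) * q ^ (d * k * (k - 2 * m + 1) / 2 + (d - 2 * r) * (m - 1)) *
    (qPoch r d m.toNat) ^ 3 * qPoch r d (m + k - 1).toNat *
    (pochInv d (m - 1)) ^ 3 * pochInv d (m - k) /
    ((1 - q) ^ 2 * (qPoch r d k.toNat) ^ 2)

lemma q_ne_zero : q ≠ 0 := RatFunc.X_ne_zero

lemma q_pow_ne_one {n : ℤ} (hn : n ≠ 0) : q ^ n ≠ 1 := by
  have key : ∀ n : ℤ, 0 < n → q ^ n ≠ 1 := by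
    intro n hn
    lift n to ℕ using le_of_lt hn
    rw [zpow_natCast]
    intro h
    have : (RatFunc.X : RatFunc ℚ) ^ n = algebraMap (Polynomial ℚ) _ (Polynomial.X ^ n) := by
      simp [RatFunc.algebraMap_X]
    rw [q, this, show (1 : RatFunc ℚ) = algebraMap (Polynomial ℚ) _ 1 by simp] at h
    have := RatFunc.algebraMap_injective (K := ℚ) h
    have hdeg := congrArg Polynomial.natDegree this
    simp [Polynomial.natDegree_X_pow] at hdeg
    omega
  rcases lt_or_gt_of_ne hn with h | h
  · intro habs
    have : q ^ (-n) = 1 := by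
      rw [zpow_neg, habs, inv_one]
    exact key (-n) (by omega) this
  · exact key n h

lemma one_sub_q_zpow_ne_zero {n : ℤ} (hn : n ≠ 0) : (1 : RatFunc ℚ) - q ^ n ≠ 0 := by
  intro h
  exact q_pow_ne_one hn (by linear_combination -h)

lemma one_sub_q_ne_zero : (1 : RatFunc ℚ) - q ≠ 0 := by
  have := one_sub_q_zpow_ne_zero (n := 1) one_ne_zero
  simpa using this

lemma qPoch_succ (r d : ℤ) (n : ℕ) :
    qPoch r d (n + 1) = qPoch r d n * (1 - q ^ (r + d * (n : ℤ))) :=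
  Finset.prod_range_succ _ n

lemma qPoch_zero_mono {r d : ℤ} {n n' : ℕ} (h : n ≤ n') (h0 : qPoch r d n = 0) :
    qPoch r d n' = 0 := by
  obtain ⟨t, rfl⟩ := Nat.exists_eq_add_of_le h
  rw [qPoch, Finset.prod_range_add, ← qPoch, h0, zero_mul]

lemma qPoch_dd_ne_zero {d : ℤ} (hd : 1 ≤ d) (n : ℕ) : qPoch d d n ≠ 0 := by
  rw [qPoch]
  refine Finset.prod_ne_zero_iff.mpr fun j _ => one_sub_q_zpow_ne_zero ?_
  have : 0 ≤ d * (j : ℤ) := by positivity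
  omega

lemma pochInv_of_neg {d m : ℤ} (h : m < 0) : pochInv d m = 0 := if_pos h

lemma pochInv_of_nonneg {d m : ℤ} (h : 0 ≤ m) :
    pochInv d m = (qPoch d d m.toNat)⁻¹ := if_neg (not_lt.2 h)

lemma F_eq_zero₁ {d r m k : ℤ} (h : pochInv d (m - k) = 0) : F d r m k = 0 := by
  simp [F, h]

lemma F_eq_zero₂ {d r m k : ℤ} (h : qPoch r d m.toNat = 0) : F d r m k = 0 := by
  simp [F, h]

lemma G_eq_zero₁ {d r m k : ℤ} (h : pochInv d (m - k) = 0) : G d r m k = 0 := by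
  simp [G, h]

lemma G_eq_zero₂ {d r m k : ℤ} (h : qPoch r d m.toNat = 0) : G d r m k = 0 := by
  simp [G, h]

lemma q_zpow_add (a b : ℤ) : q ^ (a + b) = q ^ a * q ^ b := zpow_add₀ q_ne_zero a b

lemma q_zpow_sub (a b : ℤ) : q ^ (a - b) = q ^ a * (q ^ b)⁻¹ := by
  rw [zpow_sub₀ q_ne_zero, div_eq_mul_inv]

lemma neg_one_zpow_sub_one (k : ℤ) :
    ((-1 : RatFunc ℚ)) ^ (k - 1) = -((-1 : RatFunc ℚ)) ^ k := by
  rw [zpow_sub₀ (by norm_num : (-1 : RatFunc ℚ) ≠ 0), zpow_one]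
  field_simp

section auxlem
variable {K : Type*} [Field K]

lemma aux1 {w c1 E f3 P1 P2 P3 Q1 Q2 f1 f6 f7 s : K}
    (hw : w ≠ 0) (hP3 : P3 ≠ 0) (hf1 : f1 ≠ 0) (hQ1 : Q1 ≠ 0) (hf6 : f6 ≠ 0)
    (hQ2 : Q2 ≠ 0) (hf7 : f7 ≠ 0) :
    c1 / w * (-s * E * (f3 / w) * P1 ^ 3 * P2 * ((Q1 * f6)⁻¹) ^ 3 * (Q2 * f7)⁻¹ / P3 ^ 2) =
      (c1 * (-s) * E * f3 * P1 ^ 3 * P2 * f1 ^ 2) /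
        (w ^ 2 * P3 ^ 2 * f1 ^ 2 * Q1 ^ 3 * f6 ^ 3 * Q2 * f7) := by
  have key : (w * w⁻¹) ^ 2 * ((Q1 * f6) * (Q1 * f6)⁻¹) ^ 3 * ((Q2 * f7) * (Q2 * f7)⁻¹) *
      ((P3 ^ 2) * (P3 ^ 2)⁻¹) = 1 := by
    rw [mul_inv_cancel₀ hw, mul_inv_cancel₀ (mul_ne_zero hQ1 hf6),
        mul_inv_cancel₀ (mul_ne_zero hQ2 hf7), mul_inv_cancel₀ (pow_ne_zero 2 hP3)]
    norm_num
  rw [eq_div_iff (mul_ne_zero (mul_ne_zero (mul_ne_zero (mul_ne_zero (mul_ne_zero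
    (mul_ne_zero (pow_ne_zero 2 hw) (pow_ne_zero 2 hP3)) (pow_ne_zero 2 hf1))
    (pow_ne_zero 3 hQ1)) (pow_ne_zero 3 hf6)) hQ2) hf7)]
  linear_combination (c1 * (-s) * E * f3 * P1 ^ 3 * P2 * f1 ^ 2) * key

lemma aux2 {w c2 E f3 f4 P1 P2 P3 Q1 Q2 f1 f6 f7 s : K}
    (hw : w ≠ 0) (hP3 : P3 ≠ 0) (hf1 : f1 ≠ 0) (hQ1 : Q1 ≠ 0) (hf6 : f6 ≠ 0)
    (hQ2 : Q2 ≠ 0) (hf7 : f7 ≠ 0) :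
    c2 / w * (s * E * (f3 / w) * P1 ^ 3 * (P2 * f4) * ((Q1 * f6)⁻¹) ^ 3 * Q2⁻¹ / (P3 * f1) ^ 2) =
      (c2 * s * E * f3 * P1 ^ 3 * P2 * f4 * f7) /
        (w ^ 2 * P3 ^ 2 * f1 ^ 2 * Q1 ^ 3 * f6 ^ 3 * Q2 * f7) := by
  have key : (w * w⁻¹) ^ 2 * ((Q1 * f6) * (Q1 * f6)⁻¹) ^ 3 * (Q2 * Q2⁻¹) *
      (((P3 * f1) ^ 2) * ((P3 * f1) ^ 2)⁻¹) = 1 := by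
    rw [mul_inv_cancel₀ hw, mul_inv_cancel₀ (mul_ne_zero hQ1 hf6),
        mul_inv_cancel₀ hQ2, mul_inv_cancel₀ (pow_ne_zero 2 (mul_ne_zero hP3 hf1))]
    norm_num
  rw [eq_div_iff (mul_ne_zero (mul_ne_zero (mul_ne_zero (mul_ne_zero (mul_ne_zero
    (mul_ne_zero (pow_ne_zero 2 hw) (pow_ne_zero 2 hP3)) (pow_ne_zero 2 hf1))
    (pow_ne_zero 3 hQ1)) (pow_ne_zero 3 hf6)) hQ2) hf7)]
  linear_combination (c2 * s * E * f3 * P1 ^ 3 * P2 * f4 * f7) * key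

lemma aux3 {w E f4 f5 P1 P2 P3 Q1 Q2 f1 f6 f7 s : K}
    (hw : w ≠ 0) (hP3 : P3 ≠ 0) (hf1 : f1 ≠ 0) (hQ1 : Q1 ≠ 0) (hf6 : f6 ≠ 0)
    (hQ2 : Q2 ≠ 0) (hf7 : f7 ≠ 0) :
    -s * E * (P1 * f5) ^ 3 * (P2 * f4) * ((Q1 * f6)⁻¹) ^ 3 * (Q2 * f7)⁻¹ /
        (w ^ 2 * (P3 * f1) ^ 2) =
      (-s * E * P1 ^ 3 * f5 ^ 3 * P2 * f4) /
        (w ^ 2 * P3 ^ 2 * f1 ^ 2 * Q1 ^ 3 * f6 ^ 3 * Q2 * f7) := by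
  have key : ((Q1 * f6) * (Q1 * f6)⁻¹) ^ 3 * ((Q2 * f7) * (Q2 * f7)⁻¹) *
      ((w ^ 2 * (P3 * f1) ^ 2) * (w ^ 2 * (P3 * f1) ^ 2)⁻¹) = 1 := by
    rw [mul_inv_cancel₀ (mul_ne_zero hQ1 hf6), mul_inv_cancel₀ (mul_ne_zero hQ2 hf7),
        mul_inv_cancel₀ (mul_ne_zero (pow_ne_zero 2 hw) (pow_ne_zero 2 (mul_ne_zero hP3 hf1)))]
    norm_num
  rw [eq_div_iff (mul_ne_zero (mul_ne_zero (mul_ne_zero (mul_ne_zero (mul_ne_zero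
    (mul_ne_zero (pow_ne_zero 2 hw) (pow_ne_zero 2 hP3)) (pow_ne_zero 2 hf1))
    (pow_ne_zero 3 hQ1)) (pow_ne_zero 3 hf6)) hQ2) hf7)]
  linear_combination (-s * E * P1 ^ 3 * f5 ^ 3 * P2 * f4) * key

lemma aux4 {w E P1 P2 P3 Q1 Q2 f1 f6 f7 s : K}
    (hw : w ≠ 0) (hP3 : P3 ≠ 0) (hf1 : f1 ≠ 0) (hQ1 : Q1 ≠ 0) (hf6 : f6 ≠ 0)
    (hQ2 : Q2 ≠ 0) (hf7 : f7 ≠ 0) :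
    -s * E * P1 ^ 3 * P2 * (Q1⁻¹) ^ 3 * Q2⁻¹ / (w ^ 2 * (P3 * f1) ^ 2) =
      (-s * E * P1 ^ 3 * P2 * f6 ^ 3 * f7) /
        (w ^ 2 * P3 ^ 2 * f1 ^ 2 * Q1 ^ 3 * f6 ^ 3 * Q2 * f7) := by
  have key : (Q1 * Q1⁻¹) ^ 3 * (Q2 * Q2⁻¹) *
      ((w ^ 2 * (P3 * f1) ^ 2) * (w ^ 2 * (P3 * f1) ^ 2)⁻¹) = 1 := by
    rw [mul_inv_cancel₀ hQ1, mul_inv_cancel₀ hQ2,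
        mul_inv_cancel₀ (mul_ne_zero (pow_ne_zero 2 hw) (pow_ne_zero 2 (mul_ne_zero hP3 hf1)))]
    norm_num
  rw [eq_div_iff (mul_ne_zero (mul_ne_zero (mul_ne_zero (mul_ne_zero (mul_ne_zero
    (mul_ne_zero (pow_ne_zero 2 hw) (pow_ne_zero 2 hP3)) (pow_ne_zero 2 hf1))
    (pow_ne_zero 3 hQ1)) (pow_ne_zero 3 hf6)) hQ2) hf7)]
  linear_combination (-s * E * P1 ^ 3 * P2 * f6 ^ 3 * f7) * key

end auxlem

lemma aux5 {K : Type*} [Field K] {w f3 f5 g P1 P2 Qm : K}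
    (hw : w ≠ 0) (hP1 : P1 ≠ 0) (hf5 : f5 ≠ 0) (hQm : Qm ≠ 0) :
    f5 / w * (g * (f3 / w) * P1 ^ 3 * P2 * (Qm⁻¹) ^ 3 * 1 / P1 ^ 2) =
      g * (P1 * f5) ^ 3 * (P2 * f3) * (Qm⁻¹) ^ 3 * 1 / (w ^ 2 * (P1 * f5) ^ 2) := by
  have key : (w * w⁻¹) ^ 2 * ((P1 ^ 2) * (P1 ^ 2)⁻¹) = 1 := by
    rw [mul_inv_cancel₀ hw, mul_inv_cancel₀ (pow_ne_zero 2 hP1)]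
    norm_num
  rw [eq_div_iff (mul_ne_zero (pow_ne_zero 2 hw) (pow_ne_zero 2 (mul_ne_zero hP1 hf5)))]
  linear_combination (g * (P1 * f5) ^ 3 * (P2 * f3) * (Qm⁻¹) ^ 3) * key

set_option maxHeartbeats 1000000 in
lemma caseB (d r : ℤ) (hd : 1 ≤ d) (m : ℕ) :
    qint (d * ((m+1:ℕ):ℤ) - d + r) * F d r m (((m+1:ℕ):ℤ) - 1) =
      G d r ((m:ℤ) + 1) ((m+1:ℕ):ℤ) := by
  by_cases h1 : qPoch r d m = 0
  · rw [F_eq_zero₂ (by rw [show ((m:ℤ)).toNat = m by omega]; exact h1),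
        G_eq_zero₂ (by rw [show ((m:ℤ)+1).toNat = m+1 by omega]
                       exact qPoch_zero_mono (by omega) h1), mul_zero]
  by_cases h2 : (1:RatFunc ℚ) - q ^ (r + d * (m:ℤ)) = 0
  · rw [show qint (d * ((m+1:ℕ):ℤ) - d + r) = 0 by
          rw [qint, show d * ((m+1:ℕ):ℤ) - d + r = r + d * (m:ℤ) by push_cast; ring, h2,
              zero_div],
        G_eq_zero₂ (by rw [show ((m:ℤ)+1).toNat = m+1 by omega, qPoch_succ, h2, mul_zero]),
        zero_mul]
  obtain ⟨c, hc⟩ : ∃ c : ℤ, (m:ℤ) * ((m:ℤ) + 1) = 2 * c := by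
    obtain ⟨c, hc⟩ := Int.even_mul_succ_self (m:ℤ)
    exact ⟨c, by linarith [hc]⟩
  simp only [F, G, qint]
  rw [show ((m:ℤ)).toNat = m by omega,
      show ((m:ℤ) + (((m+1:ℕ):ℤ) - 1)).toNat = 2*m by omega,
      show (((m+1:ℕ):ℤ) - 1).toNat = m by omega,
      show ((m:ℤ) + 1).toNat = m + 1 by omega,
      show ((m:ℤ) + 1 + ((m+1:ℕ):ℤ) - 1).toNat = 2*m+1 by omega,
      show (((m+1:ℕ):ℤ)).toNat = m+1 by omega]
  rw [show pochInv d ((m:ℤ)) = (qPoch d d m)⁻¹ by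
        rw [pochInv_of_nonneg (by omega), show ((m:ℤ)).toNat = m by omega],
      show pochInv d ((m:ℤ) - (((m+1:ℕ):ℤ) - 1)) = 1 by
        rw [pochInv_of_nonneg (by omega), show ((m:ℤ) - (((m+1:ℕ):ℤ) - 1)).toNat = 0 by omega]
        simp [qPoch],
      show pochInv d ((m:ℤ) + 1 - 1) = (qPoch d d m)⁻¹ by
        rw [pochInv_of_nonneg (by omega), show ((m:ℤ) + 1 - 1).toNat = m by omega],
      show pochInv d ((m:ℤ) + 1 - ((m+1:ℕ):ℤ)) = 1 by
        rw [pochInv_of_nonneg (by omega), show ((m:ℤ) + 1 - ((m+1:ℕ):ℤ)).toNat = 0 by omega]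
        simp [qPoch]]
  rw [show qPoch r d (2*m+1) = qPoch r d (2*m) * (1 - q ^ (2 * d * (m:ℤ) + r)) by
        rw [qPoch_succ, show r + d * ((2*m:ℕ):ℤ) = 2 * d * (m:ℤ) + r by push_cast; ring],
      show qPoch r d (m+1) = qPoch r d m * (1 - q ^ (r + d * (m:ℤ))) from qPoch_succ r d m,
      show d * ((m+1:ℕ):ℤ) - d + r = r + d * (m:ℤ) by push_cast; ring,
      show d * (((m+1:ℕ):ℤ) - 1) * (((m+1:ℕ):ℤ) - 1 - 2 * (m:ℤ) - 1) / 2 + (d - 2*r) * (m:ℤ) =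
          -(d*c) + (d - 2*r) * (m:ℤ) by
        rw [show d * (((m+1:ℕ):ℤ) - 1) * (((m+1:ℕ):ℤ) - 1 - 2 * (m:ℤ) - 1) = 2 * (-(d*c)) by
              push_cast; linear_combination -d * hc,
            Int.mul_ediv_cancel_left _ two_ne_zero],
      show d * ((m+1:ℕ):ℤ) * (((m+1:ℕ):ℤ) - 2 * ((m:ℤ) + 1) + 1) / 2 + (d - 2*r) * ((m:ℤ) + 1 - 1) =
          -(d*c) + (d - 2*r) * (m:ℤ) by
        rw [show d * ((m+1:ℕ):ℤ) * (((m+1:ℕ):ℤ) - 2 * ((m:ℤ) + 1) + 1) = 2 * (-(d*c)) by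
              push_cast; linear_combination -d * hc,
            Int.mul_ediv_cancel_left _ two_ne_zero]
        ring]
  exact aux5 one_sub_q_ne_zero h1 h2 (qPoch_dd_ne_zero hd m)

set_option maxHeartbeats 2000000 in
lemma caseC (d r : ℤ) (hd : 1 ≤ d) (m k : ℕ) (hk1 : 1 ≤ k) (hkm : k ≤ m)
    (h0 : qPoch r d k ≠ 0) :
    qint (d * k - d + r) * F d r m (k - 1) - qint (d * k - d + 2 * r) * F d r m k =
      G d r (m + 1) k - G d r m k := by
  obtain ⟨c, hc⟩ : ∃ c : ℤ, (k:ℤ) * ((k:ℤ) - 1) = 2 * c := by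
    obtain ⟨c, hc⟩ := Int.even_mul_succ_self ((k:ℤ) - 1)
    exact ⟨c, by linarith [hc]⟩
  simp only [F, G, qint]
  -- normalize toNat
  rw [show ((m:ℤ)).toNat = m by omega,
      show ((m:ℤ) + ((k:ℤ)-1)).toNat = m + k - 1 by omega,
      show ((m:ℤ) + (k:ℤ)).toNat = m + k by omega,
      show ((k:ℤ) - 1).toNat = k - 1 by omega,
      show ((k:ℤ)).toNat = k by omega,
      show ((m:ℤ) + 1).toNat = m + 1 by omega,
      show ((m:ℤ) + 1 + (k:ℤ) - 1).toNat = m + k by omega,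
      show ((m:ℤ) + (k:ℤ) - 1).toNat = m + k - 1 by omega]
  -- pochInv
  rw [show pochInv d ((m:ℤ)) = (qPoch d d m)⁻¹ by
        rw [pochInv_of_nonneg (by omega), show ((m:ℤ)).toNat = m by omega],
      show pochInv d ((m:ℤ) - ((k:ℤ)-1)) = (qPoch d d (m-k+1))⁻¹ by
        rw [pochInv_of_nonneg (by omega), show ((m:ℤ) - ((k:ℤ)-1)).toNat = m-k+1 by omega],
      show pochInv d ((m:ℤ) - (k:ℤ)) = (qPoch d d (m-k))⁻¹ by
        rw [pochInv_of_nonneg (by omega), show ((m:ℤ) - (k:ℤ)).toNat = m-k by omega],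
      show pochInv d ((m:ℤ)+1-1) = (qPoch d d m)⁻¹ by
        rw [pochInv_of_nonneg (by omega), show ((m:ℤ)+1-1).toNat = m by omega],
      show pochInv d ((m:ℤ)+1-(k:ℤ)) = (qPoch d d (m-k+1))⁻¹ by
        rw [pochInv_of_nonneg (by omega), show ((m:ℤ)+1-(k:ℤ)).toNat = m-k+1 by omega],
      show pochInv d ((m:ℤ)-1) = (qPoch d d (m-1))⁻¹ by
        rw [pochInv_of_nonneg (by omega), show ((m:ℤ)-1).toNat = m-1 by omega]]
  -- qPoch recurrences
  have hPk : qPoch r d k = qPoch r d (k-1) * (1 - q^(r + d*(k:ℤ) - d)) := by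
    conv_lhs => rw [show k = (k-1)+1 by omega]
    rw [qPoch_succ, show r + d * ((k-1:ℕ):ℤ) = r + d*(k:ℤ) - d by
          push_cast [Nat.cast_sub hk1]; ring]
  rw [show qPoch r d (m+k) = qPoch r d (m+k-1) * (1 - q^(r + d*(m:ℤ) + d*(k:ℤ) - d)) by
        conv_lhs => rw [show m+k = (m+k-1)+1 by omega]
        rw [qPoch_succ, show r + d * ((m+k-1:ℕ):ℤ) = r + d*(m:ℤ) + d*(k:ℤ) - d by
              push_cast [Nat.cast_sub (by omega : 1 ≤ m + k)]; ring],
      show qPoch r d (m+1) = qPoch r d m * (1 - q^(r + d*(m:ℤ))) by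
        rw [qPoch_succ],
      hPk,
      show qPoch d d m = qPoch d d (m-1) * (1 - q^(d*(m:ℤ))) by
        conv_lhs => rw [show m = (m-1)+1 by omega]
        rw [qPoch_succ, show d + d * ((m-1:ℕ):ℤ) = d*(m:ℤ) by
              push_cast [Nat.cast_sub (by omega : 1 ≤ m)]; ring],
      show qPoch d d (m-k+1) = qPoch d d (m-k) * (1 - q^(d + d*(m:ℤ) - d*(k:ℤ))) by
        rw [qPoch_succ, show d + d * ((m-k:ℕ):ℤ) = d + d*(m:ℤ) - d*(k:ℤ) by
              push_cast [Nat.cast_sub hkm]; ring]]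
  -- remove euclidean division from exponents
  rw [show d * ((k:ℤ) - 1) * ((k:ℤ) - 1 - 2 * (m:ℤ) - 1) / 2 + (d - 2 * r) * (m:ℤ) =
        d*(c - (m:ℤ)*(k:ℤ) + (m:ℤ) - (k:ℤ) + 1) + (d-2*r)*(m:ℤ) by
        rw [show d * ((k:ℤ) - 1) * ((k:ℤ) - 1 - 2 * (m:ℤ) - 1) =
              2 * (d*(c - (m:ℤ)*(k:ℤ) + (m:ℤ) - (k:ℤ) + 1)) by linear_combination d*hc,
            Int.mul_ediv_cancel_left _ two_ne_zero],
      show d * (k:ℤ) * ((k:ℤ) - 2 * (m:ℤ) - 1) / 2 + (d - 2 * r) * (m:ℤ) =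
        d*(c - (m:ℤ)*(k:ℤ)) + (d-2*r)*(m:ℤ) by
        rw [show d * (k:ℤ) * ((k:ℤ) - 2 * (m:ℤ) - 1) = 2 * (d*(c - (m:ℤ)*(k:ℤ))) by
              linear_combination d*hc,
            Int.mul_ediv_cancel_left _ two_ne_zero],
      show d * (k:ℤ) * ((k:ℤ) - 2 * ((m:ℤ)+1) + 1) / 2 + (d - 2 * r) * ((m:ℤ)+1-1) =
        d*(c - (m:ℤ)*(k:ℤ)) + (d-2*r)*(m:ℤ) by
        rw [show d * (k:ℤ) * ((k:ℤ) - 2 * ((m:ℤ)+1) + 1) = 2 * (d*(c - (m:ℤ)*(k:ℤ))) by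
              linear_combination d*hc,
            Int.mul_ediv_cancel_left _ two_ne_zero]
        ring,
      show d * (k:ℤ) * ((k:ℤ) - 2 * (m:ℤ) + 1) / 2 + (d - 2 * r) * ((m:ℤ)-1) =
        d*(c - (m:ℤ)*(k:ℤ) + (k:ℤ)) + (d-2*r)*((m:ℤ)-1) by
        rw [show d * (k:ℤ) * ((k:ℤ) - 2 * (m:ℤ) + 1) = 2 * (d*(c - (m:ℤ)*(k:ℤ) + (k:ℤ))) by
              linear_combination d*hc,
            Int.mul_ediv_cancel_left _ two_ne_zero],
      neg_one_zpow_sub_one (k:ℤ)]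
  -- nonzero facts
  have hqne := one_sub_q_ne_zero
  have hkm' : (k:ℤ) ≤ (m:ℤ) := by exact_mod_cast hkm
  have hm1 : (1:ℤ) ≤ (m:ℤ) := by exact_mod_cast hk1.trans hkm
  have hXfac : (1:RatFunc ℚ) - q^(d*(m:ℤ)) ≠ 0 := by
    refine one_sub_q_zpow_ne_zero ?_
    have h1 : (0:ℤ) < d * (m:ℤ) := mul_pos (by omega) (by omega)
    exact h1.ne'
  have hAXY : (1:RatFunc ℚ) - q^(d + d*(m:ℤ) - d*(k:ℤ)) ≠ 0 := by
    refine one_sub_q_zpow_ne_zero ?_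
    have h1 : (0:ℤ) < d * ((m:ℤ) - (k:ℤ) + 1) := mul_pos (by omega) (by omega)
    rw [show d + d*(m:ℤ) - d*(k:ℤ) = d*((m:ℤ)-(k:ℤ)+1) by ring]
    exact h1.ne'
  rw [hPk] at h0
  have hPk1 : qPoch r d (k-1) ≠ 0 := fun h => h0 (by rw [h, zero_mul])
  have hBYA : (1:RatFunc ℚ) - q^(r + d*(k:ℤ) - d) ≠ 0 := fun h => h0 (by rw [h, mul_zero])
  have hQm1 : qPoch d d (m-1) ≠ 0 := qPoch_dd_ne_zero hd _
  have hQmk : qPoch d d (m-k) ≠ 0 := qPoch_dd_ne_zero hd _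
  have hqz : ∀ n : ℤ, (q:RatFunc ℚ)^n ≠ 0 := fun n => zpow_ne_zero n q_ne_zero
  set s : RatFunc ℚ := (-1:RatFunc ℚ) ^ (k:ℤ) with hs
  set P1 := qPoch r d m with hP1
  set P2 := qPoch r d (m + k - 1) with hP2
  set P3 := qPoch r d (k - 1) with hP3
  set Q1 := qPoch d d (m - 1) with hQ1
  set Q2 := qPoch d d (m - k) with hQ2
  set f1 : RatFunc ℚ := 1 - q ^ (r + d * (k:ℤ) - d) with hf1
  set f3 : RatFunc ℚ := 1 - q ^ (2 * d * (m:ℤ) + r) with hf3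
  set f4 : RatFunc ℚ := 1 - q ^ (r + d * (m:ℤ) + d * (k:ℤ) - d) with hf4
  set f5 : RatFunc ℚ := 1 - q ^ (r + d * (m:ℤ)) with hf5
  set f6 : RatFunc ℚ := 1 - q ^ (d * (m:ℤ)) with hf6
  set f7 : RatFunc ℚ := 1 - q ^ (d + d * (m:ℤ) - d * (k:ℤ)) with hf7
  rw [aux1 hqne hPk1 hBYA hQm1 hXfac hQmk hAXY,
      aux2 hqne hPk1 hBYA hQm1 hXfac hQmk hAXY,
      aux3 hqne hPk1 hBYA hQm1 hXfac hQmk hAXY,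
      aux4 hqne hPk1 hBYA hQm1 hXfac hQmk hAXY,
      div_sub_div_same, div_sub_div_same]
  congr 1
  rw [hf1, hf3, hf4, hf5, hf6, hf7]
  rw [show (q:RatFunc ℚ)^(d * (k:ℤ) - d + r) = q^(d*(k:ℤ) - d) * q^r by
        rw [show d*(k:ℤ) - d + r = (d*(k:ℤ) - d) + r by ring, q_zpow_add (d*(k:ℤ) - d) r],
      show (q:RatFunc ℚ)^(d * (k:ℤ) - d + 2*r) = q^(d*(k:ℤ) - d) * q^r * q^r by
        rw [show d*(k:ℤ) - d + 2*r = ((d*(k:ℤ) - d) + r) + r by ring,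
            q_zpow_add ((d*(k:ℤ) - d) + r) r, q_zpow_add (d*(k:ℤ) - d) r],
      show (q:RatFunc ℚ)^(2*d*(m:ℤ) + r) = q^(d*(m:ℤ)) * q^(d*(m:ℤ)) * q^r by
        rw [show 2*d*(m:ℤ) + r = (d*(m:ℤ) + d*(m:ℤ)) + r by ring,
            q_zpow_add (d*(m:ℤ) + d*(m:ℤ)) r, q_zpow_add (d*(m:ℤ)) (d*(m:ℤ))],
      show (q:RatFunc ℚ)^(d*(c - (m:ℤ)*(k:ℤ) + (m:ℤ) - (k:ℤ) + 1) + (d-2*r)*(m:ℤ)) =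
          q^(d*(c - (m:ℤ)*(k:ℤ)) + (d-2*r)*(m:ℤ)) * q^(d + d*(m:ℤ) - d*(k:ℤ)) by
        rw [show d*(c - (m:ℤ)*(k:ℤ) + (m:ℤ) - (k:ℤ) + 1) + (d-2*r)*(m:ℤ) =
              (d*(c - (m:ℤ)*(k:ℤ)) + (d-2*r)*(m:ℤ)) + (d + d*(m:ℤ) - d*(k:ℤ)) by ring,
            q_zpow_add (d*(c - (m:ℤ)*(k:ℤ)) + (d-2*r)*(m:ℤ)) (d + d*(m:ℤ) - d*(k:ℤ))],
      show (q:RatFunc ℚ)^(d*(c - (m:ℤ)*(k:ℤ) + (k:ℤ)) + (d-2*r)*((m:ℤ)-1)) =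
          q^(d*(c - (m:ℤ)*(k:ℤ)) + (d-2*r)*(m:ℤ)) * q^(d*(k:ℤ) - d) * q^r * q^r by
        rw [show d*(c - (m:ℤ)*(k:ℤ) + (k:ℤ)) + (d-2*r)*((m:ℤ)-1) =
              (((d*(c - (m:ℤ)*(k:ℤ)) + (d-2*r)*(m:ℤ)) + (d*(k:ℤ) - d)) + r) + r by ring,
            q_zpow_add (((d*(c - (m:ℤ)*(k:ℤ)) + (d-2*r)*(m:ℤ)) + (d*(k:ℤ) - d)) + r) r,
            q_zpow_add ((d*(c - (m:ℤ)*(k:ℤ)) + (d-2*r)*(m:ℤ)) + (d*(k:ℤ) - d)) r,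
            q_zpow_add (d*(c - (m:ℤ)*(k:ℤ)) + (d-2*r)*(m:ℤ)) (d*(k:ℤ) - d)],
      show (q:RatFunc ℚ)^(r + d*(k:ℤ) - d) = q^r * q^(d*(k:ℤ) - d) by
        rw [show r + d*(k:ℤ) - d = r + (d*(k:ℤ) - d) by ring, q_zpow_add r (d*(k:ℤ) - d)],
      show (q:RatFunc ℚ)^(r + d*(m:ℤ) + d*(k:ℤ) - d) = q^r * q^(d*(m:ℤ)) * q^(d*(k:ℤ) - d) by
        rw [show r + d*(m:ℤ) + d*(k:ℤ) - d = (r + d*(m:ℤ)) + (d*(k:ℤ) - d) by ring,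
            q_zpow_add (r + d*(m:ℤ)) (d*(k:ℤ) - d), q_zpow_add r (d*(m:ℤ))],
      show (q:RatFunc ℚ)^(r + d*(m:ℤ)) = q^r * q^(d*(m:ℤ)) by
        rw [q_zpow_add r (d*(m:ℤ))]]
  rw [show (q:RatFunc ℚ)^(d*(m:ℤ)) = q^(d + d*(m:ℤ) - d*(k:ℤ)) * q^(d*(k:ℤ) - d) by
        rw [← q_zpow_add (d + d*(m:ℤ) - d*(k:ℤ)) (d*(k:ℤ) - d)]
        exact congrArg (fun e : ℤ => q ^ e) (by ring)]
  ring

/-- the WZ-pair identity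
`[dk-d+r] F(m,k-1) - [dk-d+2r] F(m,k) = G(m+1,k) - G(m,k)`. -/
theorem stmt5 (d r : ℤ) (hd : 1 ≤ d) (m k : ℤ) (hm : 0 ≤ m) (hk : 1 ≤ k) :
    qint (d * k - d + r) * F d r m (k - 1) - qint (d * k - d + 2 * r) * F d r m k =
      G d r (m + 1) k - G d r m k := by
  lift m to ℕ using hm
  have hk0 : (0:ℤ) ≤ k := by omega
  lift k to ℕ using hk0
  have hk1 : 1 ≤ k := by exact_mod_cast hk
  rcases lt_trichotomy (m + 1) k with hA | hB | hC
  · rw [F_eq_zero₁ (pochInv_of_neg (by omega)),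
        F_eq_zero₁ (pochInv_of_neg (by omega)),
        G_eq_zero₁ (pochInv_of_neg (by omega)),
        G_eq_zero₁ (pochInv_of_neg (by omega))]
    ring
  · rw [F_eq_zero₁ (m := (m:ℤ)) (k := (k:ℤ)) (pochInv_of_neg (by omega)),
        G_eq_zero₁ (m := (m:ℤ)) (k := (k:ℤ)) (pochInv_of_neg (by omega))]
    rw [mul_zero, sub_zero, sub_zero]
    subst hB
    exact caseB d r hd m
  · have hkm : k ≤ m := by omega
    by_cases h0 : qPoch r d k = 0
    · have hm0 : qPoch r d m = 0 := qPoch_zero_mono hkm h0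
      have hm1 : qPoch r d (m+1) = 0 := qPoch_zero_mono (by omega) h0
      rw [F_eq_zero₂ (by simpa using hm0), F_eq_zero₂ (by simpa using hm0),
          G_eq_zero₂ (m := (m:ℤ)) (by simpa using hm0),
          G_eq_zero₂ (m := (m:ℤ)+1) (by rw [show ((m:ℤ)+1).toNat = m+1 by omega]; exact hm1)]
      ring
    · exact caseC d r hd m k hk1 hkm h0
end

section
/- Let n, d be positive integers with gcd(n,d) = 1, let r be an integer with n + d - nd ≤ r ≤ n and n ≡ r (mod d), and let k ∈ {1, ..., (n-r)/d}. Then modulo Φ_n(q): (q^d;q^d)_{(n-r)/d - k + 1} ≡ (-1)^{k-1} q^{(k-1)(dk+2r-2d)/2} (q^d;q^d)_{(n-r)/d} / (q^r;q^d)_{k-1}. -/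
/-!
Put `m = (n - r)/d`, so that `dm = n - r` and
`(q^d;q^d)_m = (q^d;q^d)_{m-k+1} ∏_{s<k-1} (1 - q^{n-(r+ds)})`.
Since `q^n ≡ 1` modulo `Φ_n(q)`, each factor satisfies `1 - q^{n-x} ≡ -q^{-x} (1 - q^x)`, so the
tail is `≡ (-1)^{k-1} q^{-E} (q^r;q^d)_{k-1}` with `E = ∑_{s<k-1} (r + ds) = (k-1)(dk+2r-2d)/2`.
As `gcd(n, d) = 1` and `r ≥ n + d - nd`, no exponent `r + ds` with `s < k - 1` is a multiple of
`n`, so `(q^r;q^d)_{k-1}` is invertible modulo `Φ_n(q)` and can be divided out.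
-/

open Finset Polynomial

section Congruence

local notation "ι" => algebraMap ℚ[X] (RatFunc ℚ)

def regularAt (P : ℚ[X]) : Subalgebra ℚ[X] (RatFunc ℚ) where
  carrier := {A | ∃ f g, IsCoprime g P ∧ A = ι f / ι g}
  mul_mem' := by
    rintro _ _ ⟨f, g, hg, rfl⟩ ⟨f', g', hg', rfl⟩
    exact ⟨f * f', g * g', hg.mul_left hg', by rw [map_mul, map_mul, div_mul_div_comm]⟩
  add_mem' := by
    rintro _ _ ⟨f, g, hg, rfl⟩ ⟨f', g', hg', rfl⟩
    rcases eq_or_ne g 0 with rfl | hg0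
    · exact ⟨f', g', hg', by simp⟩
    rcases eq_or_ne g' 0 with rfl | hg0'
    · exact ⟨f, g, hg, by simp⟩
    refine ⟨f * g' + g * f', g * g', hg.mul_left hg', ?_⟩
    rw [div_add_div _ _ (by simpa) (by simpa)]
    simp
  algebraMap_mem' f := ⟨f, 1, isCoprime_one_left, by simp⟩

theorem modCong_iff {A B : RatFunc ℚ} {P : ℚ[X]} :
    modCong A B P ↔ ∃ C ∈ regularAt P, A - B = ι P * C := by
  constructor
  · rintro ⟨c, e, he, h⟩
    exact ⟨ι c / ι e, ⟨c, e, he, rfl⟩, by rw [h, map_mul, mul_div_assoc]⟩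
  · rintro ⟨_, ⟨c, e, he, rfl⟩, h⟩
    exact ⟨c, e, he, by rw [h, map_mul, mul_div_assoc]⟩

namespace modCong

variable {P : ℚ[X]} {A B C A' B' : RatFunc ℚ}

theorem of_eq (h : A = B) : modCong A B P :=
  modCong_iff.2 ⟨0, zero_mem _, by simp [h]⟩

theorem symm (h : modCong A B P) : modCong B A P := by
  obtain ⟨C, hC, h⟩ := modCong_iff.1 h
  exact modCong_iff.2 ⟨-C, neg_mem hC, by linear_combination -h⟩

theorem mul_left (hC : C ∈ regularAt P) (h : modCong A B P) : modCong (C * A) (C * B) P := by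
  obtain ⟨D, hD, h⟩ := modCong_iff.1 h
  exact modCong_iff.2 ⟨C * D, mul_mem hC hD, by linear_combination C * h⟩

theorem mul (hA : A ∈ regularAt P) (hB' : B' ∈ regularAt P)
    (h : modCong A B P) (h' : modCong A' B' P) : modCong (A * A') (B * B') P := by
  obtain ⟨D, hD, h⟩ := modCong_iff.1 h
  obtain ⟨D', hD', h'⟩ := modCong_iff.1 h'
  exact modCong_iff.2
    ⟨A * D' + B' * D, add_mem (mul_mem hA hD') (mul_mem hB' hD),
      by linear_combination A * h' + B' * h⟩

theorem prod {α : Type*} (s : Finset α) {f g : α → RatFunc ℚ}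
    (hf : ∀ i ∈ s, f i ∈ regularAt P) (hg : ∀ i ∈ s, g i ∈ regularAt P)
    (h : ∀ i ∈ s, modCong (f i) (g i) P) : modCong (∏ i ∈ s, f i) (∏ i ∈ s, g i) P := by
  classical
  induction s using Finset.induction_on with
  | empty => exact of_eq rfl
  | insert i s hi ih =>
    simp only [Finset.forall_mem_insert] at hf hg h
    rw [prod_insert hi, prod_insert hi]
    exact h.1.mul hf.1 (prod_mem hg.2) (ih hf.2 hg.2 h.2)

end modCong

theorem q_eq_algebraMap_X : q = ι X := RatFunc.algebraMap_X.symm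

theorem q_zpow_mem_regularAt {P : ℚ[X]} (hP : IsCoprime X P) (z : ℤ) :
    q ^ z ∈ regularAt P := by
  have hinv : q⁻¹ ∈ regularAt P := ⟨1, X, hP, by rw [q_eq_algebraMap_X, map_one, one_div]⟩
  rcases Int.eq_nat_or_neg z with ⟨k, rfl | rfl⟩
  · rw [zpow_natCast, q_eq_algebraMap_X]
    exact pow_mem (Subalgebra.algebraMap_mem _ _) k
  · rw [zpow_neg, zpow_natCast, ← inv_pow]
    exact pow_mem hinv k

theorem one_sub_q_pow_eq_algebraMap (k : ℕ) : 1 - q ^ k = ι (1 - X ^ k) := by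
  rw [q_eq_algebraMap_X, map_sub, map_pow, map_one]

theorem one_sub_q_zpow_ne_zero_s18 {z : ℤ} (hz : z ≠ 0) : 1 - q ^ z ≠ 0 := by
  have hk : z.natAbs ≠ 0 := by omega
  have hpow : q ^ z.natAbs ≠ 1 := by
    intro h
    have : (X : ℚ[X]) ^ z.natAbs = 1 := by
      apply IsFractionRing.injective ℚ[X] (RatFunc ℚ)
      rw [map_pow, ← q_eq_algebraMap_X, h, map_one]
    exact hk (by simpa using congrArg natDegree this)
  rw [sub_ne_zero, ne_comm]
  rcases Int.natAbs_eq z with h | h <;> rw [h]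
  · rwa [zpow_natCast]
  · rwa [zpow_neg, zpow_natCast, inv_ne_one]

theorem isCoprime_X_cyclotomic (n : ℕ) : IsCoprime (X : ℚ[X]) (cyclotomic n ℚ) := by
  rcases n.eq_zero_or_pos with rfl | hn
  · simpa using isCoprime_one_right
  refine .of_isCoprime_of_dvd_right ⟨X ^ (n - 1), -1, ?_⟩ (cyclotomic.dvd_X_pow_sub_one n ℚ)
  rw [← pow_succ, Nat.sub_add_cancel hn]
  ring

theorem isCoprime_one_sub_X_pow_cyclotomic {n k : ℕ} (hk : ¬ n ∣ k) :
    IsCoprime (1 - X ^ k : ℚ[X]) (cyclotomic n ℚ) := by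
  have hk0 : 0 < k := Nat.pos_of_ne_zero (by rintro rfl; exact hk (dvd_zero n))
  rw [← neg_sub, ← prod_cyclotomic_eq_X_pow_sub_one hk0, IsCoprime.neg_left_iff]
  refine IsCoprime.prod_left fun i hi => cyclotomic.isCoprime_rat ?_
  rintro rfl
  exact hk (Nat.dvd_of_mem_divisors hi)

theorem inv_one_sub_q_zpow_mem {n : ℕ} {z : ℤ} (hz : ¬ (n : ℤ) ∣ z) :
    (1 - q ^ z)⁻¹ ∈ regularAt (cyclotomic n ℚ) := by
  have hk : ¬ n ∣ z.natAbs := fun h => hz (Int.dvd_natAbs.1 (Int.natCast_dvd_natCast.2 h))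
  have hmem : (1 - q ^ z.natAbs)⁻¹ ∈ regularAt (cyclotomic n ℚ) :=
    ⟨1, 1 - X ^ z.natAbs, isCoprime_one_sub_X_pow_cyclotomic hk, by
      rw [one_sub_q_pow_eq_algebraMap, map_one, one_div]⟩
  rcases Int.natAbs_eq z with h | h <;> rw [h]
  · rwa [zpow_natCast]
  · have hq : q ^ z.natAbs ≠ 0 := pow_ne_zero _ RatFunc.X_ne_zero
    have : 1 - q ^ (-(z.natAbs : ℤ)) = -(q ^ z.natAbs)⁻¹ * (1 - q ^ z.natAbs) := by
      rw [zpow_neg, zpow_natCast]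
      field_simp
      ring
    rw [this, mul_inv, inv_neg, inv_inv]
    have hpow : q ^ z.natAbs ∈ regularAt (cyclotomic n ℚ) := by
      exact_mod_cast q_zpow_mem_regularAt (isCoprime_X_cyclotomic n) z.natAbs
    exact mul_mem (neg_mem hpow) hmem

theorem modCong_one_sub_q_zpow_sub (n : ℕ) (x : ℤ) :
    modCong (1 - q ^ ((n : ℤ) - x)) (-q ^ (-x) * (1 - q ^ x)) (cyclotomic n ℚ) := by
  obtain ⟨c, hc⟩ := cyclotomic.dvd_X_pow_sub_one n ℚ
  have hqn : q ^ (n : ℤ) - 1 = ι (cyclotomic n ℚ) * ι c := by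
    rw [← map_mul, ← hc, map_sub, map_pow, map_one, ← q_eq_algebraMap_X, zpow_natCast]
  have hq : q ≠ 0 := RatFunc.X_ne_zero
  refine modCong_iff.2 ⟨-(q ^ (-x) * ι c), neg_mem (mul_mem
    (q_zpow_mem_regularAt (isCoprime_X_cyclotomic n) _) (Subalgebra.algebraMap_mem _ c)), ?_⟩
  · have h1 : q ^ ((n : ℤ) - x) = q ^ (-x) * q ^ (n : ℤ) := by
      rw [← zpow_add₀ hq, neg_add_eq_sub]
    have h2 : q ^ (-x) * q ^ x = 1 := by rw [← zpow_add₀ hq, neg_add_cancel, zpow_zero]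
    linear_combination -h1 - h2 - q ^ (-x) * hqn

end Congruence

theorem prod_zpow_eq_zpow_sum₀ {α G₀ : Type*} [CommGroupWithZero G₀] {a : G₀}
    (ha : a ≠ 0) (s : Finset α) (f : α → ℤ) :
    ∏ i ∈ s, a ^ f i = a ^ ∑ i ∈ s, f i := by
  classical
  induction s using Finset.induction_on with
  | empty => simp
  | insert i s hi ih => rw [prod_insert hi, sum_insert hi, ih, zpow_add₀ ha]

theorem two_mul_sum_range_add_mul (r d : ℤ) (b : ℕ) :
    2 * ∑ s ∈ range b, (r + d * s) = b * (2 * r + d * (b - 1)) := by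
  induction b with
  | zero => simp
  | succ b ih =>
    rw [sum_range_succ]
    push_cast
    linear_combination ih

theorem qPoch_add (r d : ℤ) (a b : ℕ) :
    qPoch r d (a + b) =
      qPoch r d a * ∏ s ∈ range b, (1 - q ^ (r + d * ((a + b : ℕ) - 1 - s : ℤ))) := by
  rw [qPoch, qPoch, prod_range_add, ← prod_range_reflect _ b]
  congr 1
  refine prod_congr rfl fun s hs => ?_
  rw [mem_range] at hs
  congr 4
  omega

theorem prod_neg_q_zpow_mul_one_sub (r d : ℤ) (b : ℕ) :
    ∏ s ∈ range b, (-q ^ (-(r + d * s)) * (1 - q ^ (r + d * s))) =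
      (-1) ^ b * q ^ (-∑ s ∈ range b, (r + d * s)) * qPoch r d b := by
  rw [prod_mul_distrib, prod_neg, card_range, prod_zpow_eq_zpow_sum₀ RatFunc.X_ne_zero,
    sum_neg_distrib]
  rfl

theorem not_dvd_add_mul {n d m : ℕ} {r : ℤ} (hnd : n.Coprime d) (hd : 0 < d)
    (hr : (n : ℤ) + d - n * d ≤ r) (hm : (d : ℤ) * m = n - r) {s : ℕ} (hs : s < m) :
    ¬ (n : ℤ) ∣ r + d * s := by
  intro h
  have hdvd : (n : ℤ) ∣ d * (m - s) := by
    rw [show (d : ℤ) * (m - s) = n - (r + d * s) by linear_combination hm]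
    exact dvd_sub dvd_rfl h
  have hle := Int.le_of_dvd (by omega)
    ((Nat.isCoprime_iff_coprime.2 hnd).dvd_of_dvd_mul_left hdvd)
  nlinarith

theorem qPoch_modCong_cyclotomic {n : ℕ} {r d : ℤ} {a b : ℕ} (hm : d * (a + b : ℕ) = n - r)
    (hb : ∀ s < b, ¬ (n : ℤ) ∣ r + d * s) :
    modCong (qPoch d d a)
      ((-1) ^ b * q ^ (∑ s ∈ range b, (r + d * s)) * qPoch d d (a + b) / qPoch r d b)
      (cyclotomic n ℚ) := by
  set E := ∑ s ∈ range b, (r + d * s)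
  set T := ∏ s ∈ range b, (1 - q ^ ((n : ℤ) - (r + d * s)))
  have hreg : ∀ z : ℤ, q ^ z ∈ regularAt (cyclotomic n ℚ) :=
    q_zpow_mem_regularAt (isCoprime_X_cyclotomic n)
  have hsplit : qPoch d d (a + b) = qPoch d d a * T := by
    rw [qPoch_add]
    congr 1
    refine prod_congr rfl fun s _ => ?_
    congr 2
    linear_combination hm
  have hT : modCong T ((-1) ^ b * q ^ (-E) * qPoch r d b) (cyclotomic n ℚ) := by
    rw [← prod_neg_q_zpow_mul_one_sub]
    refine modCong.prod _ (fun s _ => sub_mem (one_mem _) (hreg _))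
      (fun s _ => mul_mem (neg_mem (hreg _)) (sub_mem (one_mem _) (hreg _)))
      fun s _ => modCong_one_sub_q_zpow_sub n _
  have hD : qPoch r d b ≠ 0 := prod_ne_zero_iff.2 fun s hs =>
    one_sub_q_zpow_ne_zero_s18 fun h => hb s (mem_range.1 hs) (h ▸ dvd_zero _)
  have hDinv : (qPoch r d b)⁻¹ ∈ regularAt (cyclotomic n ℚ) := by
    rw [qPoch, ← prod_inv_distrib]
    exact prod_mem fun s hs => inv_one_sub_q_zpow_mem (hb s (mem_range.1 hs))
  have hL : qPoch d d a ∈ regularAt (cyclotomic n ℚ) :=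
    prod_mem fun s _ => sub_mem (one_mem _) (hreg _)
  have hc : (-1) ^ b * q ^ E * (qPoch r d b)⁻¹ ∈ regularAt (cyclotomic n ℚ) :=
    mul_mem (mul_mem (pow_mem (neg_mem (one_mem _)) b) (hreg E)) hDinv
  have hsign : ((-1 : RatFunc ℚ) ^ b) * (-1) ^ b = 1 := by rw [← mul_pow]; norm_num
  have hexp : q ^ E * q ^ (-E) = 1 := by
    rw [← zpow_add₀ RatFunc.X_ne_zero, add_neg_cancel, zpow_zero]
  convert (hT.symm.mul_left hc).mul_left hL using 1
  · field_simp
    linear_combination -(qPoch d d a * (q ^ E * q ^ (-E))) * hsign - qPoch d d a * hexp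
  · rw [hsplit]
    field_simp

theorem stmt18_general (n d : ℕ) (hd : 0 < d) (hnd : Nat.gcd n d = 1) (r : ℤ)
    (hr1 : (n : ℤ) + d - n * d ≤ r) (hr2 : r ≤ (n : ℤ))
    (hmod : (n : ℤ) ≡ r [ZMOD (d : ℤ)])
    (k : ℕ) (hk1 : 1 ≤ k) (hk2 : k ≤ (((n : ℤ) - r) / d).toNat) :
    modCong
      (qPoch d d ((((n : ℤ) - r) / d).toNat - k + 1))
      ((-1) ^ (k - 1) * q ^ ((((k : ℤ) - 1) * ((d : ℤ) * k + 2 * r - 2 * d)) / 2) *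
        qPoch d d (((n : ℤ) - r) / d).toNat / qPoch r d (k - 1))
      (Polynomial.cyclotomic n ℚ) := by
  set m := (((n : ℤ) - r) / d).toNat
  have hm : (d : ℤ) * m = n - r := by
    rw [Int.toNat_of_nonneg (Int.ediv_nonneg (by omega) (by omega))]
    exact Int.mul_ediv_cancel' (Int.ModEq.dvd hmod.symm)
  have hab : m - k + 1 + (k - 1) = m := by omega
  have hE :
      ((k : ℤ) - 1) * (d * k + 2 * r - 2 * d) / 2 = ∑ s ∈ range (k - 1), (r + d * s) := by
    rw [← Int.mul_ediv_cancel_left (∑ s ∈ range (k - 1), (r + d * s)) two_ne_zero,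
      two_mul_sum_range_add_mul]
    push_cast [hk1]
    ring_nf
  have key := qPoch_modCong_cyclotomic (a := m - k + 1) (hab ▸ hm)
    fun s hs => not_dvd_add_mul hnd hd hr1 hm (by omega)
  rwa [hab, ← hE] at key

/-- modulo `Φ_n(q)`, for `1 ≤ k ≤ (n-r)/d`,
`(q^d;q^d)_{(n-r)/d-k+1} ≡ (-1)^{k-1} q^{(k-1)(dk+2r-2d)/2} (q^d;q^d)_{(n-r)/d}/(q^r;q^d)_{k-1}`. -/
theorem stmt18 (n d : ℕ) (hn : 0 < n) (hd : 0 < d) (hnd : Nat.gcd n d = 1) (r : ℤ)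
    (hr1 : (n : ℤ) + d - n * d ≤ r) (hr2 : r ≤ (n : ℤ))
    (hmod : (n : ℤ) ≡ r [ZMOD (d : ℤ)])
    (k : ℕ) (hk1 : 1 ≤ k) (hk2 : k ≤ (((n : ℤ) - r) / d).toNat) :
    modCong
      (qPoch d d ((((n : ℤ) - r) / d).toNat - k + 1))
      ((-1) ^ (k - 1) * q ^ ((((k : ℤ) - 1) * ((d : ℤ) * k + 2 * r - 2 * d)) / 2) *
        qPoch d d (((n : ℤ) - r) / d).toNat / qPoch r d (k - 1))
      (Polynomial.cyclotomic n ℚ) :=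
  stmt18_general n d hd hnd r hr1 hr2 hmod k hk1 hk2
end
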